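/- A quadratic state module M ⊆ 𝐒 is archimedean if and only if there exists N > 0 such that N − x_1² − ⋯ − x_n² ∈ M. -/

import Mathlib

open scoped BigOperators Matrix Kronecker

namespace StatePoly

/-! ### Words and symmetrized words -/

/-- Words in the letters `x_1, …, x_n`: the free monoid on `Fin n`. -/
abbrev Word (n : ℕ) := FreeMonoid (Fin n)

/-- The word reversal (the involution `⋆` on words). -/
def wordRev {n : ℕ} (w : Word n) : Word n := FreeMonoid.reverse w

/-- Two nonempty words are identified iff they are equal or reverses of each other;
this realizes the relation `ς(w) = ς(w⋆)`. -/
def wordSetoid (n : ℕ) : Setoid {l : List (Fin n) // l ≠ []} where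
  r u v := u.1 = v.1 ∨ u.1 = v.1.reverse
  iseqv := by
    constructor
    · intro u; exact Or.inl rfl
    · rintro u v (h | h)
      · exact Or.inl h.symm
      · right; rw [h, List.reverse_reverse]
    · rintro u v w (h1 | h1) (h2 | h2)
      · exact Or.inl (h1.trans h2)
      · right; rw [h1, h2]
      · right; rw [h1, h2]
      · left; rw [h1, h2, List.reverse_reverse]

/-- Symbols `ς(w)`, `w` a nonempty word, modulo `ς(w) = ς(w⋆)`. -/
def SW (n : ℕ) := Quotient (wordSetoid n)

/-- The commutative algebra `𝒮` of state polynomials: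
a polynomial ring in the symbols `ς(w)`. -/
abbrev SPoly (n : ℕ) := MvPolynomial (SW n) ℝ

/-- The algebra `𝐒 = 𝒮 ⊗ ℝ⟨x⟩` of nc state polynomials, realized as the monoid algebra
of the free monoid over the polynomial ring `𝒮`. -/
abbrev NCSPoly (n : ℕ) := MonoidAlgebra (SPoly n) (Word n)

variable {n : ℕ}

/-- The state symbol `ς(w)` of a word, with `ς(1) = 1`. -/
noncomputable def sigWordL (l : List (Fin n)) : SPoly n :=
  if h : l = [] then 1 else MvPolynomial.X (Quotient.mk (wordSetoid n) ⟨l, h⟩)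

/-- The unital `𝒮`-linear map `ς : 𝐒 → 𝒮`. -/
noncomputable def sig (f : NCSPoly n) : SPoly n :=
  Finsupp.sum f.coeff fun w c => c * sigWordL (FreeMonoid.toList w)

/-- The involution `⋆` on `𝐒`: it fixes `𝒮 ∪ {x_1, …, x_n}` pointwise and reverses words. -/
noncomputable def ncStar (f : NCSPoly n) : NCSPoly n :=
  MonoidAlgebra.ofCoeff (Finsupp.mapDomain wordRev f.coeff)

/-- The embedding `𝒮 ⊆ 𝐒`. -/
noncomputable def iotaS (p : SPoly n) : NCSPoly n := MonoidAlgebra.single 1 p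

/-- The variable `x_i` as an nc state polynomial. -/
noncomputable def ncX (i : Fin n) : NCSPoly n := MonoidAlgebra.single (FreeMonoid.of i) 1

/-- A real constant as an nc state polynomial. -/
noncomputable def ncConst (r : ℝ) : NCSPoly n := iotaS (MvPolynomial.C r)

/-- `f ∈ 𝐒` lies in the free algebra `ℝ⟨x⟩ ⊆ 𝐒` iff all its coefficients are real constants. -/
def IsFreePoly (f : NCSPoly n) : Prop := ∀ w : Word n, ∃ r : ℝ, f.coeff w = MvPolynomial.C r

/-! ### Degrees -/

/-- `|w|` on symmetrized words. -/
def swDeg : SW n → ℕ :=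
  Quotient.lift (fun l : {l : List (Fin n) // l ≠ []} => l.1.length)
    (by rintro u v (h | h) <;> simp [h])

/-- The degree of a monomial `∏ ς(u_j)^{e_j}`, namely `∑ e_j |u_j|`. -/
def monoWeight (m : SW n →₀ ℕ) : ℕ := m.sum fun q e => e * swDeg q

/-- The degree of a state polynomial. -/
noncomputable def sDeg (p : SPoly n) : ℕ := p.support.sup monoWeight

/-- The degree of an nc state polynomial: the maximum over the `𝐒`-words appearing in it of
`deg ς(u_1)⋯ς(u_m)v = |v| + ∑_j |u_j|`. -/
noncomputable def ncDeg (f : NCSPoly n) : ℕ :=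
  (Finsupp.support f.coeff).sup fun w => sDeg (f.coeff w) + (FreeMonoid.toList w).length

lemma sDeg_zero : sDeg (0 : SPoly n) = 0 := by
  simp [sDeg, MvPolynomial.support_zero]

lemma sDeg_add_le (p q : SPoly n) : sDeg (p + q) ≤ max (sDeg p) (sDeg q) := by
  classical
  refine Finset.sup_le fun m hm => ?_
  rcases Finset.mem_union.mp (MvPolynomial.support_add hm) with h | h
  · exact le_max_of_le_left (Finset.le_sup h)
  · exact le_max_of_le_right (Finset.le_sup h)

lemma sDeg_smul_le (c : ℝ) (p : SPoly n) : sDeg (c • p) ≤ sDeg p :=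
  Finset.sup_le fun _m hm => Finset.le_sup (MvPolynomial.support_smul hm)

lemma sDeg_one : sDeg (1 : SPoly n) = 0 := by
  classical
  refine le_antisymm (Finset.sup_le fun m hm => ?_) (Nat.zero_le _)
  have : m = 0 := by
    by_contra h
    have := MvPolynomial.mem_support_iff.mp hm
    rw [MvPolynomial.coeff_one, if_neg (fun he => h he.symm)] at this
    exact this rfl
  subst this
  simp [monoWeight]

/-- The subspace `𝒮_{k}` of state polynomials of degree at most `k`. -/
noncomputable def SPolyLe (n k : ℕ) : Submodule ℝ (SPoly n) where
  carrier := {p | sDeg p ≤ k}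
  add_mem' := fun {p q} hp hq =>
    le_trans (sDeg_add_le p q) (max_le hp hq)
  zero_mem' := by simp [Set.mem_setOf_eq, sDeg_zero]
  smul_mem' := fun c p hp => le_trans (sDeg_smul_le c p) hp

lemma one_mem_SPolyLe (k : ℕ) : (1 : SPoly n) ∈ SPolyLe n k := by
  show sDeg (1 : SPoly n) ≤ k
  simp [sDeg_one]

/-- Extension by zero of a linear functional on `𝒮_{k}` to `𝒮`
(used to refer to values of truncated functionals). -/
noncomputable def lext {n k : ℕ} (L : SPolyLe n k →ₗ[ℝ] ℝ) (p : SPoly n) : ℝ :=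
  if h : sDeg p ≤ k then L ⟨p, h⟩ else 0

/-! ### Evaluations -/

section Eval

variable {A : Type*} [Ring A] [Module ℝ A]

/-- Evaluation of a word at a tuple `X`. -/
noncomputable def wEvalL (X : Fin n → A) (l : List (Fin n)) : A := (l.map X).prod

/-- The value assigned to the symbol `ς(w)`: `λ(w(X))`. -/
noncomputable def stVal (lam : A → ℝ) (X : Fin n → A) (q : SW n) : ℝ :=
  lam (wEvalL X (Quotient.out q).1)

/-- Evaluation `a(λ; X) ∈ ℝ` of a state polynomial. -/
noncomputable def sEval (lam : A → ℝ) (X : Fin n → A) (p : SPoly n) : ℝ :=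
  MvPolynomial.eval (stVal lam X) p

/-- Evaluation `f(λ; X) ∈ A` of an nc state polynomial. -/
noncomputable def ncEval (lam : A → ℝ) (X : Fin n → A) (f : NCSPoly n) : A :=
  Finsupp.sum f.coeff fun w c => sEval lam X c • wEvalL X (FreeMonoid.toList w)

end Eval

/-! ### States on matrix algebras -/

/-- A density matrix: positive semidefinite with trace 1. -/
def IsDensity {k : ℕ} (ρ : Matrix (Fin k) (Fin k) ℝ) : Prop :=
  ρ.PosSemidef ∧ ρ.trace = 1

/-- The state on `k×k` matrices induced by a density matrix. -/
noncomputable def matState {k : ℕ} (ρ : Matrix (Fin k) (Fin k) ℝ) :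
    Matrix (Fin k) (Fin k) ℝ → ℝ := fun Y => (ρ * Y).trace

/-- The vector state on `k×k` matrices induced by a vector `ψ`. -/
noncomputable def vecStateM {k : ℕ} (ψ : Fin k → ℝ) :
    Matrix (Fin k) (Fin k) ℝ → ℝ := fun Y => ψ ⬝ᵥ Y.mulVec ψ

/-! ### States on B(H) -/

section Op

variable (H : Type*) [NormedAddCommGroup H] [InnerProductSpace ℝ H] [CompleteSpace H]

/-- A state on `B(H)`: a unital positive `⋆`-linear functional. -/
def IsState (lam : (H →L[ℝ] H) →ₗ[ℝ] ℝ) : Prop :=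
  lam 1 = 1 ∧ (∀ Y : H →L[ℝ] H, lam (ContinuousLinearMap.adjoint Y) = lam Y) ∧
    ∀ Y : H →L[ℝ] H, 0 ≤ lam (Y * ContinuousLinearMap.adjoint Y)

/-- A vector state on `B(H)`. -/
def IsVecState (lam : (H →L[ℝ] H) →ₗ[ℝ] ℝ) : Prop :=
  ∃ v : H, ‖v‖ = 1 ∧ ∀ Y : H →L[ℝ] H, lam Y = inner ℝ (Y v) v

/-- The state semialgebraic set `𝒟_C^∞` determined by the constraint set `C ⊆ 𝐒`. -/
def DCinf (C : Set (NCSPoly n)) :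
    Set ((((H →L[ℝ] H) →ₗ[ℝ] ℝ)) × (Fin n → (H →L[ℝ] H))) :=
  {p | IsState H p.1 ∧ (∀ i, ContinuousLinearMap.adjoint (p.2 i) = p.2 i) ∧
    ∀ c ∈ C, (ncEval (⇑p.1) p.2 c).IsPositive}

/-- The subset `vec-𝒟_C^∞` of `𝒟_C^∞` in which the state is a vector state. -/
def vecDCinf (C : Set (NCSPoly n)) :
    Set ((((H →L[ℝ] H) →ₗ[ℝ] ℝ)) × (Fin n → (H →L[ℝ] H))) :=
  {p ∈ DCinf H C | IsVecState H p.1}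

end Op

/-! ### Positivity structures -/

/-- `Ω`: sums of products of elements `ς(h h⋆)`, `h ∈ 𝐒`. -/
def Omega (n : ℕ) : Set (SPoly n) :=
  {x | ∃ (m : ℕ) (g : Fin m → SPoly n),
    (∀ i, ∃ (mi : ℕ) (h : Fin mi → NCSPoly n), g i = ∏ j, sig (h j * ncStar (h j))) ∧
    x = ∑ i, g i}

/-- Membership in the smallest subset of `𝒮` containing `{1} ∪ S` that is closed under
addition and under multiplication by squares of elements of `A`. -/
inductive QMemIn (A S : Set (SPoly n)) : SPoly n → Prop
  | base {s : SPoly n} : s ∈ insert (1 : SPoly n) S → QMemIn A S s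
  | add {p q : SPoly n} : QMemIn A S p → QMemIn A S q → QMemIn A S (p + q)
  | mul_sq {a p : SPoly n} : a ∈ A → QMemIn A S p → QMemIn A S (a ^ 2 * p)

/-- The quadratic module generated by `S` in `𝒮`. -/
def QM (S : Set (SPoly n)) : Set (SPoly n) := {x | QMemIn Set.univ S x}

/-- The set `C^ς = {ς(p c p⋆) : p ∈ ℝ⟨x⟩, c ∈ {1} ∪ C}`. -/
def Csig (C : Set (NCSPoly n)) : Set (SPoly n) :=
  {x | ∃ p : NCSPoly n, IsFreePoly p ∧ ∃ c ∈ insert (1 : NCSPoly n) C,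
    x = sig (p * c * ncStar p)}

/-- A balanced constraint set: closed under `⋆`, and non-symmetric elements come in `±` pairs. -/
def Balanced (C : Set (NCSPoly n)) : Prop :=
  (∀ c ∈ C, ncStar c ∈ C) ∧ ∀ c ∈ C, c ≠ ncStar c → -c ∈ C

/-- An algebraically bounded constraint set: `N - x_1^2 - ⋯ - x_n^2 = ∑ p_i c_i p_i⋆` with
`c_i ∈ {1} ∪ C ∩ ℝ⟨x⟩` and `p_i ∈ ℝ⟨x⟩`. -/
def AlgBounded (C : Set (NCSPoly n)) : Prop :=
  ∃ N : ℝ, 0 < N ∧ ∃ (m : ℕ) (p c : Fin m → NCSPoly n),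
    (∀ i, IsFreePoly (p i)) ∧
    (∀ i, c i = 1 ∨ (c i ∈ C ∧ IsFreePoly (c i))) ∧
    ncConst N - ∑ j : Fin n, ncX j ^ 2 = ∑ i, p i * c i * ncStar (p i)

/-- The truncated quadratic module `M(C)_d`. -/
def MCd (C : Set (NCSPoly n)) (d : ℕ) : Set (SPoly n) :=
  {x | ∃ (K : ℕ) (f c : Fin K → NCSPoly n),
    (∀ i, c i ∈ insert (1 : NCSPoly n) C) ∧
    (∀ i, ncDeg (f i * c i * ncStar (f i)) ≤ 2 * d) ∧
    x = ∑ i, sig (f i * c i * ncStar (f i))}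

end StatePoly

namespace StatePoly

/-- A quadratic state module `M ⊆ 𝐒`: `1 ∈ M`, `M + M ⊆ M`, `f M f⋆ ⊆ M` for every `f ∈ 𝐒`,
and `ς(M) ⊆ M`. -/
structure IsQuadStateModule {n : ℕ} (M : Set (NCSPoly n)) : Prop where
  one_mem : (1 : NCSPoly n) ∈ M
  add_mem : ∀ p ∈ M, ∀ q ∈ M, p + q ∈ M
  conj_mem : ∀ f : NCSPoly n, ∀ p ∈ M, f * p * ncStar f ∈ M
  sig_mem : ∀ p ∈ M, iotaS (sig p) ∈ M

/-- A quadratic state module is archimedean if for every symmetric `f ∈ 𝐒` there is `N > 0`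
with `N ± f ∈ M`. -/
def QSMArchimedean {n : ℕ} (M : Set (NCSPoly n)) : Prop :=
  ∀ f : NCSPoly n, ncStar f = f →
    ∃ N : ℝ, 0 < N ∧ ncConst N + f ∈ M ∧ ncConst N - f ∈ M

/-! The `M`-bounded elements `a`, those with `N - a a⋆ ∈ M` for some `N`, form a subsemiring of
`𝐒`. If `N - ∑ xᵢ² ∈ M`, it contains every `xᵢ`, hence every word `w`; since `ς(M) ⊆ M`, a bound
`K - w w⋆ ∈ M` together with Cauchy–Schwarz `ς(w)² ≤ ς(w w⋆)` bounds the symbol `ς(w)`. So every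
element is bounded, and for symmetric `f` with `N - f² ∈ M` the identity
`(N + 1) ± 2f = (N - f²) + (1 ± f)(1 ± f)⋆` gives archimedeanity. -/

open MonoidAlgebra

variable {n : ℕ}

lemma ncConst_eq_algebraMap (r : ℝ) : (ncConst r : NCSPoly n) = algebraMap ℝ (NCSPoly n) r :=
  rfl

lemma ncConst_eq_smul_one (r : ℝ) : (ncConst r : NCSPoly n) = r • 1 :=
  Algebra.algebraMap_eq_smul_one r

lemma iotaS_add (p q : SPoly n) : iotaS (p + q) = iotaS p + iotaS q :=
  map_add singleOneRingHom p q

lemma iotaS_sub (p q : SPoly n) : iotaS (p - q) = iotaS p - iotaS q :=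
  map_sub singleOneRingHom p q

lemma iotaS_mul_iotaS (p q : SPoly n) : iotaS p * iotaS q = iotaS (p * q) :=
  (map_mul singleOneRingHom p q).symm

lemma ncStar_single (w : Word n) (p : SPoly n) :
    ncStar (single w p) = single (wordRev w) p := by
  rw [ncStar, coeff_single, Finsupp.mapDomain_single]
  rfl

lemma ncStar_zero : ncStar (0 : NCSPoly n) = 0 :=
  congrArg ofCoeff Finsupp.mapDomain_zero

lemma ncStar_add (f g : NCSPoly n) : ncStar (f + g) = ncStar f + ncStar g :=
  congrArg ofCoeff Finsupp.mapDomain_add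

noncomputable def ncStarAddHom : NCSPoly n →+ NCSPoly n where
  toFun := ncStar
  map_zero' := ncStar_zero
  map_add' := ncStar_add

lemma ncStar_sub (f g : NCSPoly n) : ncStar (f - g) = ncStar f - ncStar g :=
  map_sub ncStarAddHom f g

lemma ncStar_sum {ι : Type*} (s : Finset ι) (f : ι → NCSPoly n) :
    ncStar (∑ i ∈ s, f i) = ∑ i ∈ s, ncStar (f i) :=
  map_sum ncStarAddHom f s

lemma ncStar_mul (f g : NCSPoly n) : ncStar (f * g) = ncStar g * ncStar f := by
  induction f using induction_linear with
  | zero => rw [zero_mul, ncStar_zero, mul_zero]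
  | add f₁ f₂ h₁ h₂ => rw [add_mul, ncStar_add, ncStar_add, mul_add, h₁, h₂]
  | single v p =>
    induction g using induction_linear with
    | zero => rw [mul_zero, ncStar_zero, zero_mul]
    | add g₁ g₂ h₁ h₂ => rw [mul_add, ncStar_add, ncStar_add, add_mul, h₁, h₂]
    | single w q =>
      rw [single_mul_single, ncStar_single, ncStar_single, ncStar_single, single_mul_single,
        mul_comm p q, wordRev, wordRev, wordRev, FreeMonoid.reverse_mul]

lemma ncStar_iotaS (p : SPoly n) : ncStar (iotaS p) = iotaS p :=
  ncStar_single 1 p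

lemma ncStar_one : ncStar (1 : NCSPoly n) = 1 :=
  ncStar_iotaS 1

lemma ncStar_ncConst (r : ℝ) : ncStar (ncConst r : NCSPoly n) = ncConst r :=
  ncStar_iotaS _

lemma ncStar_ncX (i : Fin n) : ncStar (ncX i) = ncX i :=
  ncStar_single _ _

lemma iotaS_mul_comm (p : SPoly n) (f : NCSPoly n) : iotaS p * f = f * iotaS p :=
  Algebra.commutes p f

lemma iotaS_mul_eq_smul (p : SPoly n) (f : NCSPoly n) : iotaS p * f = p • f :=
  (Algebra.smul_def p f).symm

lemma sig_single (w : Word n) (p : SPoly n) :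
    sig (single w p) = p * sigWordL (FreeMonoid.toList w) := by
  rw [sig, coeff_single]
  exact Finsupp.sum_single_index (zero_mul _)

lemma sig_zero : sig (0 : NCSPoly n) = 0 :=
  Finsupp.sum_zero_index

lemma sig_add (f g : NCSPoly n) : sig (f + g) = sig f + sig g :=
  Finsupp.sum_add_index' (fun _ => zero_mul _) fun _ _ _ => add_mul _ _ _

lemma sig_sub (f g : NCSPoly n) : sig (f - g) = sig f - sig g :=
  Finsupp.sum_sub_index fun _ _ _ => sub_mul _ _ _

lemma sig_iotaS_mul (p : SPoly n) (f : NCSPoly n) : sig (iotaS p * f) = p * sig f := by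
  induction f using induction_linear with
  | zero => rw [mul_zero, sig_zero, mul_zero]
  | add f₁ f₂ h₁ h₂ => rw [mul_add, sig_add, sig_add, h₁, h₂, mul_add]
  | single w q => rw [iotaS, single_mul_single, one_mul, sig_single, sig_single, mul_assoc]

lemma sig_iotaS (p : SPoly n) : sig (iotaS p) = p := by
  rw [iotaS, sig_single]
  exact mul_right_eq_self₀.mpr (Or.inl (dif_pos rfl))

lemma sigWordL_reverse (l : List (Fin n)) : sigWordL l.reverse = sigWordL l := by
  rcases eq_or_ne l [] with rfl | hl
  · rfl
  · rw [sigWordL, sigWordL, dif_neg (List.reverse_ne_nil_iff.mpr hl), dif_neg hl]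
    exact congrArg MvPolynomial.X (Quotient.sound (Or.inr rfl))

lemma sig_ncStar (f : NCSPoly n) : sig (ncStar f) = sig f := by
  induction f using induction_linear with
  | zero => rw [ncStar_zero]
  | add f₁ f₂ h₁ h₂ => rw [ncStar_add, sig_add, sig_add, h₁, h₂]
  | single w p =>
    rw [ncStar_single, sig_single, sig_single]
    exact congrArg _ (sigWordL_reverse _)

lemma sig_of_out (q : SW n) :
    sig (of (SPoly n) (Word n) (FreeMonoid.ofList (Quotient.out q).1)) = MvPolynomial.X q := by
  rw [of_apply, sig_single, one_mul, FreeMonoid.toList_ofList, sigWordL,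
    dif_neg (Quotient.out q).2, Subtype.coe_eta]
  exact congrArg MvPolynomial.X (Quotient.out_eq q)

def IsBounded (M : Set (NCSPoly n)) (a : NCSPoly n) : Prop :=
  ∃ N : ℝ, 0 < N ∧ ncConst N - a * ncStar a ∈ M

namespace IsQuadStateModule

variable {M : Set (NCSPoly n)} (hM : IsQuadStateModule M)
include hM

lemma zero_mem : (0 : NCSPoly n) ∈ M := by
  simpa only [zero_mul] using hM.conj_mem 0 1 hM.one_mem

lemma mul_ncStar_mem (h : NCSPoly n) : h * ncStar h ∈ M := by
  simpa only [mul_one] using hM.conj_mem h 1 hM.one_mem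

lemma smul_mem {r : ℝ} (hr : 0 ≤ r) {f : NCSPoly n} (hf : f ∈ M) : r • f ∈ M := by
  have h := hM.conj_mem (ncConst √r) f hf
  rwa [ncStar_ncConst, ncConst_eq_smul_one, smul_mul_assoc, one_mul, mul_smul_comm, mul_one,
    smul_smul, Real.mul_self_sqrt hr] at h

lemma sum_mem {ι : Type*} (s : Finset ι) {f : ι → NCSPoly n} (hf : ∀ i ∈ s, f i ∈ M) :
    ∑ i ∈ s, f i ∈ M :=
  Finset.sum_induction f (· ∈ M) (fun _ _ ha hb => hM.add_mem _ ha _ hb) hM.zero_mem hf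

lemma iotaS_sig_mul_ncStar_sub_sq_mem (h : NCSPoly n) :
    iotaS (sig (h * ncStar h) - sig h ^ 2) ∈ M := by
  have expand : sig ((h - iotaS (sig h)) * ncStar (h - iotaS (sig h))) =
      sig (h * ncStar h) - sig h ^ 2 := by
    rw [ncStar_sub, ncStar_iotaS, sub_mul, mul_sub, mul_sub, sig_sub, sig_sub, sig_sub,
      ← iotaS_mul_comm, sig_iotaS_mul, sig_iotaS_mul, iotaS_mul_iotaS, sig_iotaS, sig_ncStar]
    ring
  simpa only [expand] using hM.sig_mem _ (hM.mul_ncStar_mem (h - iotaS (sig h)))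

lemma isBounded_ncConst (r : ℝ) : IsBounded M (ncConst r) := by
  refine ⟨r ^ 2 + 1, by positivity, ?_⟩
  rw [ncStar_ncConst, ncConst_eq_algebraMap, ncConst_eq_algebraMap, ← map_mul, ← map_sub,
    show r ^ 2 + 1 - r * r = 1 by ring, map_one]
  exact hM.one_mem

lemma isBounded_add {a b : NCSPoly n} (ha : IsBounded M a) (hb : IsBounded M b) :
    IsBounded M (a + b) := by
  obtain ⟨N, hN, hNa⟩ := ha
  obtain ⟨K, hK, hKb⟩ := hb
  refine ⟨2 * (N + K), by positivity, ?_⟩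
  have expand : ncConst (2 * (N + K)) - (a + b) * ncStar (a + b) =
      (2 : ℝ) • (ncConst N - a * ncStar a) + (2 : ℝ) • (ncConst K - b * ncStar b) +
        (a - b) * ncStar (a - b) := by
    rw [ncStar_add, ncStar_sub, ncConst_eq_smul_one, ncConst_eq_smul_one, ncConst_eq_smul_one]
    simp only [add_mul, mul_add, sub_mul, mul_sub]
    module
  rw [expand]
  exact hM.add_mem _ (hM.add_mem _ (hM.smul_mem zero_le_two hNa) _
    (hM.smul_mem zero_le_two hKb)) _ (hM.mul_ncStar_mem _)

lemma isBounded_mul {a b : NCSPoly n} (ha : IsBounded M a) (hb : IsBounded M b) :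
    IsBounded M (a * b) := by
  obtain ⟨N, hN, hNa⟩ := ha
  obtain ⟨K, hK, hKb⟩ := hb
  refine ⟨N * K, by positivity, ?_⟩
  have expand : ncConst (N * K) - a * b * ncStar (a * b) =
      a * (ncConst K - b * ncStar b) * ncStar a + K • (ncConst N - a * ncStar a) := by
    rw [ncStar_mul, ncConst_eq_smul_one, ncConst_eq_smul_one, ncConst_eq_smul_one]
    simp only [mul_sub, sub_mul, smul_sub, mul_smul_comm, smul_mul_assoc, smul_smul, mul_one,
      mul_assoc]
    module
  rw [expand]
  exact hM.add_mem _ (hM.conj_mem a _ hKb) _ (hM.smul_mem hK.le hNa)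

def boundedSubsemiring : Subsemiring (NCSPoly n) where
  carrier := {a | IsBounded M a}
  mul_mem' := hM.isBounded_mul
  one_mem' := show IsBounded M 1 by
    simpa only [ncConst_eq_algebraMap, map_one] using hM.isBounded_ncConst 1
  add_mem' := hM.isBounded_add
  zero_mem' := show IsBounded M 0 by
    simpa only [ncConst_eq_algebraMap, map_zero] using hM.isBounded_ncConst 0

lemma mem_boundedSubsemiring {a : NCSPoly n} : a ∈ hM.boundedSubsemiring ↔ IsBounded M a :=
  Iff.rfl

section SphericalBound

variable {N : ℝ} (hN : 0 < N) (hb : ncConst N - ∑ i : Fin n, ncX i ^ 2 ∈ M)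
include hN hb

lemma ncX_mem_boundedSubsemiring (i : Fin n) : ncX i ∈ hM.boundedSubsemiring := by
  refine ⟨N, hN, ?_⟩
  have split : ncConst N - ncX i * ncStar (ncX i) =
      (ncConst N - ∑ j : Fin n, ncX j ^ 2) +
        ∑ j ∈ Finset.univ.erase i, ncX j * ncStar (ncX j) := by
    rw [← Finset.add_sum_erase _ _ (Finset.mem_univ i)]
    simp only [ncStar_ncX, sq]
    abel
  rw [split]
  exact hM.add_mem _ hb _ (hM.sum_mem _ fun j _ => hM.mul_ncStar_mem _)

lemma of_mem_boundedSubsemiring (w : Word n) :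
    of (SPoly n) (Word n) w ∈ hM.boundedSubsemiring := by
  induction w using FreeMonoid.inductionOn' with
  | one => rw [map_one]; exact Subsemiring.one_mem _
  | of_mul i w hw => rw [map_mul]; exact mul_mem (hM.ncX_mem_boundedSubsemiring hN hb i) hw

lemma iotaS_X_mem_boundedSubsemiring (q : SW n) :
    iotaS (MvPolynomial.X q) ∈ hM.boundedSubsemiring := by
  set w := of (SPoly n) (Word n) (FreeMonoid.ofList (Quotient.out q).1)
  obtain ⟨K, hK, hKw⟩ : w ∈ hM.boundedSubsemiring := hM.of_mem_boundedSubsemiring hN hb _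
  refine ⟨K, hK, ?_⟩
  have hcs := hM.iotaS_sig_mul_ncStar_sub_sq_mem w
  rw [sig_of_out] at hcs
  have split : ncConst K - iotaS (MvPolynomial.X q) * ncStar (iotaS (MvPolynomial.X q)) =
      iotaS (sig (ncConst K - w * ncStar w)) +
        iotaS (sig (w * ncStar w) - MvPolynomial.X q ^ 2) := by
    rw [ncStar_iotaS, iotaS_mul_iotaS, sig_sub, ← iotaS_add, sub_add_sub_cancel, ncConst,
      sig_iotaS, iotaS_sub, sq]
  rw [split]
  exact hM.add_mem _ (hM.sig_mem _ hKw) _ hcs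

lemma iotaS_mem_boundedSubsemiring (p : SPoly n) : iotaS p ∈ hM.boundedSubsemiring := by
  induction p using MvPolynomial.induction_on with
  | C r => exact hM.isBounded_ncConst r
  | add p q hp hq => rw [iotaS_add]; exact Subsemiring.add_mem _ hp hq
  | mul_X p q hp =>
    rw [← iotaS_mul_iotaS]
    exact mul_mem hp (hM.iotaS_X_mem_boundedSubsemiring hN hb q)

lemma boundedSubsemiring_eq_top : hM.boundedSubsemiring = ⊤ := by
  refine (Subsemiring.eq_top_iff' _).mpr fun f => ?_
  induction f using MonoidAlgebra.induction_on with
  | of w => exact hM.of_mem_boundedSubsemiring hN hb w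
  | add f g hf hg => exact Subsemiring.add_mem _ hf hg
  | smul p f hf =>
    rw [← iotaS_mul_eq_smul]
    exact mul_mem (hM.iotaS_mem_boundedSubsemiring hN hb p) hf

end SphericalBound

lemma qsmArchimedean_of_forall_isBounded (h : ∀ a, IsBounded M a) : QSMArchimedean M := by
  intro f hf
  obtain ⟨N, hN, hNf⟩ := h f
  rw [hf] at hNf
  refine ⟨(N + 1) / 2, by positivity, ?_, ?_⟩
  · have e : ncConst ((N + 1) / 2) + f =
        (1 / 2 : ℝ) • ((ncConst N - f * f) + (1 + f) * ncStar (1 + f)) := by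
      rw [ncStar_add, ncStar_one, hf, ncConst_eq_smul_one, ncConst_eq_smul_one]
      simp only [mul_add, add_mul, mul_one, one_mul]
      module
    rw [e]
    exact hM.smul_mem (by norm_num) (hM.add_mem _ hNf _ (hM.mul_ncStar_mem _))
  · have e : ncConst ((N + 1) / 2) - f =
        (1 / 2 : ℝ) • ((ncConst N - f * f) + (1 - f) * ncStar (1 - f)) := by
      rw [ncStar_sub, ncStar_one, hf, ncConst_eq_smul_one, ncConst_eq_smul_one]
      simp only [mul_sub, sub_mul, mul_one, one_mul]
      module
    rw [e]
    exact hM.smul_mem (by norm_num) (hM.add_mem _ hNf _ (hM.mul_ncStar_mem _))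

end IsQuadStateModule

theorem statement_9_general (n : ℕ) (M : Set (NCSPoly n))
    (hM : IsQuadStateModule M) :
    QSMArchimedean M ↔ ∃ N : ℝ, 0 < N ∧ ncConst N - ∑ i : Fin n, ncX i ^ 2 ∈ M := by
  constructor
  · intro harch
    have hsym : ncStar (∑ i : Fin n, ncX i ^ 2) = ∑ i : Fin n, ncX i ^ 2 := by
      rw [ncStar_sum]
      exact Finset.sum_congr rfl fun i _ => by rw [sq, ncStar_mul, ncStar_ncX]
    obtain ⟨N, hN, -, hNsub⟩ := harch _ hsym
    exact ⟨N, hN, hNsub⟩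
  · rintro ⟨N, hN, hb⟩
    refine hM.qsmArchimedean_of_forall_isBounded fun a => ?_
    rw [← hM.mem_boundedSubsemiring, hM.boundedSubsemiring_eq_top hN hb]
    exact Subsemiring.mem_top a

/-- Proposition `prop:cyclicqmarch`.
A quadratic state module `M ⊆ 𝐒` is archimedean if and only if there exists `N > 0` such
that `N − x_1² − ⋯ − x_n² ∈ M`. -/
theorem statement_9 (n : ℕ) (hn : 1 ≤ n) (M : Set (NCSPoly n))
    (hM : IsQuadStateModule M) :
    QSMArchimedean M ↔ ∃ N : ℝ, 0 < N ∧ ncConst N - ∑ i : Fin n, ncX i ^ 2 ∈ M :=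
  statement_9_general n M hM

end StatePoly
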